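/- Let π : G → H be a continuous open surjective homomorphism of topological groups, where G is a simply sm-factorizable P-group and H is ω-narrow. Then H is ℝ-factorizable. -/

import Mathlib

/-!
Pull a continuous `f : H → ℝ` back to `g = f ∘ π` on `G`. For each set `B` of a countable base of
`ℝ`, the cozero set `g⁻¹ B` is saturated with respect to a homomorphism onto a metrizable group,
whose kernel is a normal Gδ subgroup. In the P-group `G` the intersection of these countably many
kernels is an open normal subgroup, and `g` is constant on its cosets because the base separates
points. Its image `N` under the open surjection `π` is an open normal subgroup of `H` on whose
cosets `f` is constant, and ω-narrowness makes `H ⧸ N` countable. So `f` factors through the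
countable discrete, hence separable metrizable, group `H ⧸ N`.
-/

open Topology TopologicalSpace Pointwise Function Set

def IsCozero {X : Type*} [TopologicalSpace X] (U : Set X) : Prop :=
  ∃ f : X → ℝ, Continuous f ∧ U = f ⁻¹' {x : ℝ | x ≠ 0}

/-- A topological group is simply sm-factorizable if every cozero set is saturated with
respect to some continuous surjective homomorphism onto a separable metrizable topological group. -/
def SimplySMFactorizable (G : Type*) [Group G] [TopologicalSpace G] : Prop :=
  ∀ U : Set G, IsCozero U →
    ∃ (H : Type) (gH : Group H) (tH : TopologicalSpace H),
      letI := gH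
      letI := tH
      IsTopologicalGroup H ∧ SeparableSpace H ∧ MetrizableSpace H ∧
        ∃ π : G →* H, Continuous π ∧ Surjective π ∧ ⇑π ⁻¹' (⇑π '' U) = U

/-- A (para)topological group is ω-narrow if each neighborhood of the identity translates
over a countable set to cover the group. -/
def OmegaNarrow (G : Type*) [Group G] [TopologicalSpace G] : Prop :=
  ∀ U ∈ 𝓝 (1 : G), ∃ A : Set G, A.Countable ∧ A * U = Set.univ ∧ U * A = Set.univ

/-- A topological group is ℝ-factorizable if every continuous real-valued function factors
through a continuous surjective homomorphism onto a separable metrizable topological group. -/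
def RFactorizable (G : Type*) [Group G] [TopologicalSpace G] : Prop :=
  ∀ f : G → ℝ, Continuous f →
    ∃ (K : Type) (gK : Group K) (tK : TopologicalSpace K),
      letI := gK
      letI := tK
      IsTopologicalGroup K ∧ SeparableSpace K ∧ MetrizableSpace K ∧
        ∃ p : G →* K, Continuous p ∧ Surjective p ∧ ∃ h : K → ℝ, Continuous h ∧ f = h ∘ p

theorem IsCozero.preimage {X Y : Type*} [TopologicalSpace X] [TopologicalSpace Y] {U : Set Y}
    (hU : IsCozero U) {g : X → Y} (hg : Continuous g) : IsCozero (g ⁻¹' U) := by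
  obtain ⟨f, hf, rfl⟩ := hU
  exact ⟨f ∘ g, hf.comp hg, rfl⟩

theorem IsOpen.isCozero {X : Type*} [TopologicalSpace X] [PerfectlyNormalSpace X] {U : Set X}
    (hU : IsOpen U) : IsCozero U := by
  obtain ⟨f, hf, -⟩ :=
    perfectlyNormalSpace_iff_forall_isClosed_preimage_zero.mp ‹_› Uᶜ hU.isClosed_compl
  exact ⟨f, f.continuous, by rw [← compl_compl U, hf]; rfl⟩

theorem MonoidHom.isGδ_ker {G M : Type*} [Group G] [TopologicalSpace G] [Group M]
    [TopologicalSpace M] [MetrizableSpace M] {φ : G →* M} (hφ : Continuous φ) :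
    IsGδ (φ.ker : Set G) :=
  isClosed_singleton.isGδ.preimage (f := φ) hφ

theorem SimplySMFactorizable.exists_normal_isGδ_mul_mem {G : Type*} [Group G]
    [TopologicalSpace G] (hG : SimplySMFactorizable G) {U : Set G} (hU : IsCozero U) :
    ∃ N : Subgroup G, N.Normal ∧ IsGδ (N : Set G) ∧ ∀ x ∈ U, ∀ n ∈ N, x * n ∈ U := by
  obtain ⟨M, _, _, -, -, _, φ, hφ, -, hsat⟩ := hG U hU
  refine ⟨φ.ker, φ.normal_ker, φ.isGδ_ker hφ, fun x hx n hn => ?_⟩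
  rw [← hsat]
  exact ⟨x, hx, by rw [map_mul, φ.mem_ker.mp hn, mul_one]⟩

theorem SimplySMFactorizable.exists_isOpen_normal_forall_mul_eq {G : Type*} [Group G]
    [TopologicalSpace G] (hG : SimplySMFactorizable G) (hP : ∀ s : Set G, IsGδ s → IsOpen s)
    {g : G → ℝ} (hg : Continuous g) :
    ∃ N : Subgroup G, N.Normal ∧ IsOpen (N : Set G) ∧ ∀ x, ∀ n ∈ N, g (x * n) = g x := by
  obtain ⟨b, hbc, -, hb⟩ := exists_countable_basis ℝ
  have : Countable b := hbc.to_subtype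
  choose N hNn hNδ hN using fun B : b =>
    hG.exists_normal_isGδ_mul_mem ((hb.isOpen B.2).isCozero.preimage hg)
  refine ⟨⨅ B, N B, Subgroup.normal_iInf_normal hNn, hP _ ?_, fun x n hn => ?_⟩
  · rw [Subgroup.coe_iInf]
    exact .iInter hNδ
  · by_contra hne
    obtain ⟨B, hB, hxB, hBn⟩ := hb.exists_subset_of_mem_open
      (show g x ∈ {g (x * n)}ᶜ from Ne.symm hne) isOpen_compl_singleton
    exact hBn (hN ⟨B, hB⟩ x hxB n (Subgroup.mem_iInf.mp hn _)) rfl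

theorem OmegaNarrow.countable_quotient {H : Type*} [Group H] [TopologicalSpace H]
    (hH : OmegaNarrow H) {N : Subgroup H} (hN : IsOpen (N : Set H)) : Countable (H ⧸ N) := by
  obtain ⟨A, hA, hAN, -⟩ := hH N (hN.mem_nhds N.one_mem)
  rw [← Set.countable_univ_iff]
  refine (hA.image QuotientGroup.mk).mono ?_
  rintro k -
  obtain ⟨x, rfl⟩ := QuotientGroup.mk_surjective k
  obtain ⟨a, ha, n, hn, rfl⟩ : x ∈ A * N := hAN ▸ mem_univ x
  exact ⟨a, ha, (QuotientGroup.mk_mul_of_mem a hn).symm⟩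

def FactorsThroughSeparableMetrizable {G : Type*} [Group G] [TopologicalSpace G] (f : G → ℝ) :
    Prop :=
  ∃ (K : Type) (gK : Group K) (tK : TopologicalSpace K),
    letI := gK
    letI := tK
    IsTopologicalGroup K ∧ SeparableSpace K ∧ MetrizableSpace K ∧
      ∃ p : G →* K, Continuous p ∧ Surjective p ∧ ∃ h : K → ℝ, Continuous h ∧ f = h ∘ p

theorem factorsThroughSeparableMetrizable_comp_of_countable {H K : Type*} [Group H]
    [TopologicalSpace H] [Group K] [TopologicalSpace K] [DiscreteTopology K] [Countable K]
    {p : H →* K} (hp : Continuous p) (hps : Surjective p) (h : K → ℝ) :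
    FactorsThroughSeparableMetrizable (h ∘ p) := by
  let e : Shrink.{0} K ≃* K := Shrink.mulEquiv
  have : DiscreteTopology (Shrink.{0} K) := (Shrink.homeomorph.{0} K).discreteTopology
  have : Countable (Shrink.{0} K) := Countable.of_equiv K e.symm.toEquiv
  refine ⟨Shrink.{0} K, inferInstance, inferInstance, inferInstance, inferInstance,
    inferInstance, e.symm.toMonoidHom.comp p,
    (continuous_of_discreteTopology (f := e.symm)).comp hp, e.symm.surjective.comp hps, h ∘ e, continuous_of_discreteTopology, ?_⟩
  ext x
  simp

theorem factorsThroughSeparableMetrizable_of_forall_mul_eq {H : Type*} [Group H]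
    [TopologicalSpace H] [SeparatelyContinuousMul H] {N : Subgroup H} [N.Normal]
    [Countable (H ⧸ N)] (hN : IsOpen (N : Set H)) {f : H → ℝ}
    (hf : ∀ x, ∀ n ∈ N, f (x * n) = f x) : FactorsThroughSeparableMetrizable f := by
  have := QuotientGroup.discreteTopology hN
  have hfN : ∀ x y, QuotientGroup.leftRel N x y → f x = f y := fun x y hxy => by
    simpa using (hf x _ (QuotientGroup.leftRel_apply.mp hxy)).symm
  exact factorsThroughSeparableMetrizable_comp_of_countable QuotientGroup.continuous_mk
    (QuotientGroup.mk'_surjective N) (Quotient.lift f hfN)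

theorem statement13_general {G H : Type*} [Group G] [TopologicalSpace G]
    [Group H] [TopologicalSpace H] [IsTopologicalGroup H]
    (π : G →* H) (hc : Continuous π) (ho : IsOpenMap π) (hs : Surjective π)
    (hG : SimplySMFactorizable G) (hP : ∀ s : Set G, IsGδ s → IsOpen s)
    (hH : OmegaNarrow H) : RFactorizable H := by
  intro f hf
  obtain ⟨N, hNn, hNo, hN⟩ := hG.exists_isOpen_normal_forall_mul_eq hP (hf.comp hc)
  have : (N.map π).Normal := hNn.map π hs
  have hπN : IsOpen ((N.map π : Subgroup H) : Set H) := by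
    rw [Subgroup.coe_map]
    exact ho _ hNo
  have := hH.countable_quotient hπN
  refine factorsThroughSeparableMetrizable_of_forall_mul_eq hπN ?_
  rintro y _ ⟨n, hn, rfl⟩
  obtain ⟨x, rfl⟩ := hs y
  simpa [← map_mul] using hN x n hn

/-- An ω-narrow continuous open homomorphic image of a simply sm-factorizable topological
P-group is ℝ-factorizable. -/
theorem statement13 {G H : Type*} [Group G] [TopologicalSpace G] [IsTopologicalGroup G]
    [Group H] [TopologicalSpace H] [IsTopologicalGroup H]
    (π : G →* H) (hc : Continuous π) (ho : IsOpenMap π) (hs : Surjective π)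
    (hG : SimplySMFactorizable G) (hP : ∀ s : Set G, IsGδ s → IsOpen s)
    (hH : OmegaNarrow H) : RFactorizable H :=
  statement13_general π hc ho hs hG hP hH
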